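/- For real α ≥ 2, define α₀ as the largest real root of z^7 + 42z^6 + 684z^5 + 4038z^4 + 13119z^3 + 12048z^2 - 100204z - 59328. Then the inequality p_α(5)² ≥ p_α(4)·p_α(6) fails for 2 ≤ α < α₀ and holds for α ≥ α₀, where p_α(n) are the coefficients of ∏_{m≥1}(1-q^m)^{-α} (polynomials in α given explicitly for n = 4, 5, 6). -/

import Mathlib

/-!
Evaluating the recursion gives `p_α(5)² - p_α(4) p_α(6) = α² (α + 3) P(α) / 86400`, where `P` is
the degree-7 polynomial of the statement. Writing `P(z) = z g(z) - 59328`, the polynomial `g` is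
increasing on `[2, ∞)` with `g(2) > 0`, so `P` is strictly increasing there. Since `P(2) < 0 < P(10)`,
the largest root `α₀` lies in `[2, ∞)`, and for `α ≥ 2` the sign of `P(α)` is the sign of `α - α₀`.
-/

/-- The fractional partition function `p_α(n)`, the coefficient of `q^n` in
`∏_{m≥1}(1-q^m)^{-α}`, defined via the recursion
`p_α(n) = (α/n) ∑_{ℓ=1}^n σ(ℓ) p_α(n-ℓ)` with `p_α(0) = 1`. -/
noncomputable def fracPartition (α : ℝ) : ℕ → ℝ
  | 0 => 1
  | n + 1 =>
    α / (n + 1) * ∑ ℓ ∈ (Finset.Icc 1 (n + 1)).attach,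
      (∑ d ∈ Nat.divisors ℓ.1, (d : ℝ)) * fracPartition α (n + 1 - ℓ.1)
  decreasing_by
    have := (Finset.mem_Icc.mp ℓ.2).1; omega

open ArithmeticFunction
open scoped ArithmeticFunction.sigma

theorem fracPartition_zero (α : ℝ) : fracPartition α 0 = 1 := by
  rw [fracPartition]

theorem fracPartition_succ (α : ℝ) (n : ℕ) :
    fracPartition α (n + 1) =
      α / (n + 1) * ∑ k ∈ Finset.range (n + 1), (σ 1 (k + 1) : ℝ) * fracPartition α (n - k) := by
  rw [fracPartition,
    Finset.sum_attach _ (fun ℓ : ℕ => (∑ d ∈ ℓ.divisors, (d : ℝ)) * fracPartition α (n + 1 - ℓ)),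
    ← Finset.Ico_add_one_right_eq_Icc, Finset.sum_Ico_eq_sum_range]
  simp [sigma_one_apply, add_comm 1]

theorem sigma_one_values :
    σ 1 1 = 1 ∧ σ 1 2 = 3 ∧ σ 1 3 = 4 ∧ σ 1 4 = 7 ∧ σ 1 5 = 6 ∧ σ 1 6 = 12 := by
  decide

theorem fracPartition_four (α : ℝ) :
    fracPartition α 4 = α * (α ^ 3 + 18 * α ^ 2 + 59 * α + 42) / 24 := by
  norm_num [fracPartition_succ, Finset.sum_range_succ, fracPartition_zero, sigma_one_values]
  ring

theorem fracPartition_five (α : ℝ) :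
    fracPartition α 5 = α * (α ^ 4 + 30 * α ^ 3 + 215 * α ^ 2 + 450 * α + 144) / 120 := by
  norm_num [fracPartition_succ, Finset.sum_range_succ, fracPartition_zero, sigma_one_values]
  ring

theorem fracPartition_six (α : ℝ) :
    fracPartition α 6 =
      α * (α ^ 5 + 45 * α ^ 4 + 565 * α ^ 3 + 2475 * α ^ 2 + 3394 * α + 1440) / 720 := by
  norm_num [fracPartition_succ, Finset.sum_range_succ, fracPartition_zero, sigma_one_values]
  ring

def heimPoly (z : ℝ) : ℝ :=
  z ^ 7 + 42 * z ^ 6 + 684 * z ^ 5 + 4038 * z ^ 4 + 13119 * z ^ 3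
    + 12048 * z ^ 2 - 100204 * z - 59328

theorem continuous_heimPoly : Continuous heimPoly := by
  unfold heimPoly
  fun_prop

theorem heimPoly_eq (z : ℝ) :
    heimPoly z =
      z * (z ^ 6 + 42 * z ^ 5 + 684 * z ^ 4 + 4038 * z ^ 3 + 13119 * z ^ 2 + 12048 * z - 100204)
        - 59328 := by
  unfold heimPoly
  ring

theorem heimPoly_strictMonoOn : StrictMonoOn heimPoly (Set.Ici 2) := by
  intro b (hb : 2 ≤ b) a _ hba
  have hb0 : 0 ≤ b := by linarith
  have hg_pos : 0 < b ^ 6 + 42 * b ^ 5 + 684 * b ^ 4 + 4038 * b ^ 3 + 13119 * b ^ 2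
      + 12048 * b - 100204 := by
    have : 2 ^ 6 + 42 * 2 ^ 5 + 684 * 2 ^ 4 + 4038 * 2 ^ 3 + 13119 * 2 ^ 2 + 12048 * 2
        ≤ b ^ 6 + 42 * b ^ 5 + 684 * b ^ 4 + 4038 * b ^ 3 + 13119 * b ^ 2 + 12048 * b := by
      gcongr
    linarith
  have hg_mono : b ^ 6 + 42 * b ^ 5 + 684 * b ^ 4 + 4038 * b ^ 3 + 13119 * b ^ 2
      + 12048 * b - 100204 ≤ a ^ 6 + 42 * a ^ 5 + 684 * a ^ 4 + 4038 * a ^ 3 + 13119 * a ^ 2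
      + 12048 * a - 100204 := by
    gcongr
  rw [heimPoly_eq, heimPoly_eq]
  exact sub_lt_sub_right (mul_lt_mul hba hg_mono hg_pos (by linarith)) _

theorem exists_two_le_and_heimPoly_eq_zero : ∃ z, 2 ≤ z ∧ heimPoly z = 0 := by
  have hmem : (0 : ℝ) ∈ Set.Icc (heimPoly 2) (heimPoly 10) := by
    constructor <;> norm_num [heimPoly]
  obtain ⟨z, hz, hz0⟩ :=
    intermediate_value_Icc (by norm_num) continuous_heimPoly.continuousOn hmem
  exact ⟨z, hz.1, hz0⟩

theorem fracPartition_five_sq_sub_four_mul_six (α : ℝ) :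
    fracPartition α 5 ^ 2 - fracPartition α 4 * fracPartition α 6 =
      α ^ 2 * (α + 3) * heimPoly α / 86400 := by
  rw [fracPartition_four, fracPartition_five, fracPartition_six, heimPoly]
  ring

theorem fracPartition_four_mul_six_le_five_sq_iff {α : ℝ} (hα : 0 < α) :
    fracPartition α 4 * fracPartition α 6 ≤ fracPartition α 5 ^ 2 ↔ 0 ≤ heimPoly α := by
  have hfactor : 0 < α ^ 2 * (α + 3) / 86400 := by positivity
  rw [← sub_nonneg, fracPartition_five_sq_sub_four_mul_six, mul_div_right_comm,
    mul_nonneg_iff_of_pos_left hfactor]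

theorem heim_neuhauser_exception (α₀ : ℝ)
    (hroot : α₀ ^ 7 + 42 * α₀ ^ 6 + 684 * α₀ ^ 5 + 4038 * α₀ ^ 4 + 13119 * α₀ ^ 3
        + 12048 * α₀ ^ 2 - 100204 * α₀ - 59328 = 0)
    (hmax : ∀ z : ℝ, z ^ 7 + 42 * z ^ 6 + 684 * z ^ 5 + 4038 * z ^ 4 + 13119 * z ^ 3
        + 12048 * z ^ 2 - 100204 * z - 59328 = 0 → z ≤ α₀) :
    ∀ α : ℝ, 2 ≤ α →
      (fracPartition α 4 * fracPartition α 6 ≤ fracPartition α 5 ^ 2 ↔ α₀ ≤ α) := by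
  obtain ⟨z, hz, hz0⟩ := exists_two_le_and_heimPoly_eq_zero
  have hα₀ : 2 ≤ α₀ := hz.trans (hmax z hz0)
  intro α hα
  rw [fracPartition_four_mul_six_le_five_sq_iff (by linarith), ← show heimPoly α₀ = 0 from hroot]
  exact heimPoly_strictMonoOn.le_iff_le hα₀ hα
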